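/- Let a be an almost Loday bracket whose Jacobiator J is C^∞(M)-linear in the third argument, i.e. J(α,β,fγ) = f·J(α,β,γ). Define [f,J](α,β,γ) := J(α,fβ,γ) − f·J(α,β,γ). Then [f,J](α,β,γ) = λ(df⊗a(α,β)⊗γ) + λ(df⊗β⊗a(α,γ)) + λ(d(ρ(α)f)⊗β⊗γ) − a(α, λ(df⊗β⊗γ)), provided ρ(a(α,β)) = [ρ(α),ρ(β)] for all α,β. -/
import Mathlib


/-- The Jacobiator of an ℝ-bilinear bracket. -/
def jac {V : Type*} [AddCommGroup V] [Module ℝ V]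
    (a : V →ₗ[ℝ] V →ₗ[ℝ] V) (x y z : V) : V :=
  a (a x y) z + a y (a x z) - a x (a y z)

/-- Let `a` be an almost Loday bracket whose Jacobiator `J` is
`C^∞(M)`-linear in the third argument and whose anchor satisfies
`ρ(a(α,β)) = [ρ(α),ρ(β)]`.  Then
`J(α,f•β,γ) − f•J(α,β,γ) = λ(df⊗a(α,β)⊗γ) + λ(df⊗β⊗a(α,γ)) + λ(d(ρ(α)f)⊗β⊗γ) − a(α, λ(df⊗β⊗γ))`,
where `lam f α β` stands for `λ(df ⊗ α ⊗ β)`. -/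
theorem jacobiator_middle_slot_defect
    {R V : Type*} [CommRing R] [Algebra ℝ R]
    [AddCommGroup V] [Module ℝ V] [Module R V] [IsScalarTower ℝ R V]
    (a : V →ₗ[ℝ] V →ₗ[ℝ] V) (ρ : V → Derivation ℝ R R)
    (lam : R → V → V → V)
    (hLeib : ∀ (α β : V) (f : R), a α (f • β) = f • a α β + ρ α f • β)
    (hLeib' : ∀ (α β : V) (f : R), a (f • α) β = f • a α β - ρ β f • α + lam f α β)
    (hanchor : ∀ α β : V, ρ (a α β) = ⁅ρ α, ρ β⁆)
    (hJ3 : ∀ (α β γ : V) (f : R), jac a α β (f • γ) = f • jac a α β γ) :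
    ∀ (f : R) (α β γ : V),
      jac a α (f • β) γ - f • jac a α β γ =
        lam f (a α β) γ + lam f β (a α γ) + lam (ρ α f) β γ - a α (lam f β γ) := by
  intro f α β γ
  have key :
      jac a α (f • β) γ =
        f • jac a α β γ + lam f (a α β) γ + lam f β (a α γ) + lam (ρ α f) β γ
          - a α (lam f β γ) := by
    simp only [jac, hLeib, hLeib', map_add, map_sub, map_smul, LinearMap.add_apply,
      LinearMap.sub_apply, LinearMap.smul_apply, hanchor, Derivation.commutator_apply,
      smul_add, smul_sub, sub_smul]
    module
  rw [key]
  abel
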